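/- Algorithmic strengthening for void entries: if Γ₁, x : ∘ ⊢ P ▷ Γ₂, x : ∘ is derivable, then Γ₁ ⊢ P ▷ Γ₂ is derivable; moreover, if Γ₁, x : (∘, N) ⊢ P ▷ Γ₂, x : (∘, N') is derivable, then Γ₁, x : N ⊢ P ▷ Γ₂, x : N' is derivable, and symmetrically for (M, ∘). -/

import Mathlib

/-! Qualified session types for the pi calculus (Giunti),
    algorithmic type checking and split-based declarative system. -/

inductive Qual : Type
| lin : Qual
| un : Qual

mutual
inductive PreTy : Type
| recv : Ty → EpTy → PreTy
| send : Ty → EpTy → PreTy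
| ende : PreTy
inductive EpTy : Type
| q : Qual → PreTy → EpTy
| var : Nat → EpTy
| mu : EpTy → EpTy
inductive Ty : Type
| ep : EpTy → Ty
| ch : EpTy → EpTy → Ty
end

mutual
def PreTy.subst : PreTy → Nat → EpTy → PreTy
| .recv T S, n, R => .recv (T.subst n R) (S.subst n R)
| .send T S, n, R => .send (T.subst n R) (S.subst n R)
| .ende, _, _ => .ende
def EpTy.subst : EpTy → Nat → EpTy → EpTy
| .q qu p, n, R => .q qu (p.subst n R)
| .var a, n, R => if a = n then R else .var a
| .mu S, n, R => .mu (S.subst (n+1) R)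
def Ty.subst : Ty → Nat → EpTy → Ty
| .ep S, n, R => .ep (S.subst n R)
| .ch S1 S2, n, R => .ch (S1.subst n R) (S2.subst n R)
end

/-- Equi-recursive unfolding of an end-point type to a head (qualified) form. -/
inductive Unf : EpTy → EpTy → Prop
| refl (q p) : Unf (.q q p) (.q q p)
| mu {S S'} : Unf (S.subst 0 (.mu S)) S' → Unf (.mu S) S'

/-- Algorithmic entries: an end-point type or the void marker. -/
inductive Entry : Type
| ep : EpTy → Entry
| void : Entry

/-- A context entry: a single entry or a channel pair of entries. -/
inductive CEntry : Type
| single : Entry → CEntry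
| chan : Entry → Entry → CEntry

def Ty.toC : Ty → CEntry
| .ep S => .single (.ep S)
| .ch S1 S2 => .chan (.ep S1) (.ep S2)

def unEnd : Entry := .ep (.q .un .ende)

/-- Safety predicate on context entries. -/
inductive SafeC : CEntry → Prop
| single (M) : SafeC (.single M)
| voidL (N) : SafeC (.chan .void N)
| voidR (M) : SafeC (.chan M .void)
| endL (N) : SafeC (.chan unEnd N)
| endR (M) : SafeC (.chan M unEnd)
| linlin {T : Ty} {S1 S2 : EpTy} : SafeC T.toC → SafeC (.chan (.ep S1) (.ep S2)) →
    SafeC (.chan (.ep (.q .lin (.recv T S1))) (.ep (.q .lin (.send T S2))))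
| unun {T : Ty} {S1 S2 : EpTy} : SafeC T.toC →
    SafeC (.chan (.ep (.q .un (.recv T S1))) (.ep (.q .un (.send T S2))))

/-- Unrestricted entries. -/
inductive UnE : Entry → Prop
| void : UnE .void
| un (p) : UnE (.ep (.q .un p))

def UnC : CEntry → Prop
| .single M => UnE M
| .chan M N => UnE M ∧ UnE N

/-- Pi-calculus processes with annotated restriction. -/
inductive Proc : Type
| nil : Proc
| par : Proc → Proc → Proc
| repl : Proc → Proc
| nu : String → Ty → Proc → Proc
| out : String → String → Proc → Proc
| inp : String → String → Proc → Proc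

/-- Free variables of a process. -/
def fv : Proc → Set String
| .nil => ∅
| .par P Q => fv P ∪ fv Q
| .repl P => fv P
| .nu x _ P => fv P \ {x}
| .out x y P => {x} ∪ ({y} ∪ fv P)
| .inp x y P => {x} ∪ (fv P \ {y})

/-- Algorithmic typing contexts. -/
abbrev Ctx := String → Option CEntry

def Ctx.upd (Γ : Ctx) (x : String) (E : CEntry) : Ctx :=
  fun y => if y = x then some E else Γ y

def Ctx.del (Γ : Ctx) (x : String) : Ctx :=
  fun y => if y = x then none else Γ y

def SafeCtx (Γ : Ctx) : Prop := ∀ x E, Γ x = some E → SafeC E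
def UnCtx (Γ : Ctx) : Prop := ∀ x E, Γ x = some E → UnC E

/-- Algorithmic value-checking judgment Γ ⊢ x : T ▷ Γ'. -/
inductive CheckVar : Ctx → String → Ty → Ctx → Prop
| vL {Γ : Ctx} {x p} : Γ x = some (.single (.ep (.q .lin p))) →
    CheckVar Γ x (.ep (.q .lin p)) (Γ.upd x (.single .void))
| vU {Γ : Ctx} {x p} : Γ x = some (.single (.ep (.q .un p))) →
    CheckVar Γ x (.ep (.q .un p)) Γ
| vLLl {Γ : Ctx} {x p1 p2} : Γ x = some (.chan (.ep (.q .lin p1)) (.ep (.q .lin p2))) →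
    CheckVar Γ x (.ch (.q .lin p1) (.q .lin p2)) (Γ.upd x (.chan .void .void))
| vLLr {Γ : Ctx} {x p1 p2} : Γ x = some (.chan (.ep (.q .lin p1)) (.ep (.q .lin p2))) →
    CheckVar Γ x (.ch (.q .lin p2) (.q .lin p1)) (Γ.upd x (.chan .void .void))
| vLl {Γ : Ctx} {x p N} : Γ x = some (.chan (.ep (.q .lin p)) N) →
    CheckVar Γ x (.ep (.q .lin p)) (Γ.upd x (.chan .void N))
| vLr {Γ : Ctx} {x p M} : Γ x = some (.chan M (.ep (.q .lin p))) →
    CheckVar Γ x (.ep (.q .lin p)) (Γ.upd x (.chan M .void))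
| vUUl {Γ : Ctx} {x p1 p2} : Γ x = some (.chan (.ep (.q .un p1)) (.ep (.q .un p2))) →
    CheckVar Γ x (.ch (.q .un p1) (.q .un p2)) Γ
| vUUr {Γ : Ctx} {x p1 p2} : Γ x = some (.chan (.ep (.q .un p1)) (.ep (.q .un p2))) →
    CheckVar Γ x (.ch (.q .un p2) (.q .un p1)) Γ
| vUl {Γ : Ctx} {x p N} : Γ x = some (.chan (.ep (.q .un p)) N) → N ≠ .ep (.q .un p) →
    CheckVar Γ x (.ep (.q .un p)) Γ
| vUr {Γ : Ctx} {x p M} : Γ x = some (.chan M (.ep (.q .un p))) → M ≠ .ep (.q .un p) →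
    CheckVar Γ x (.ep (.q .un p)) Γ
| vEE {Γ : Ctx} {x} : Γ x = some (.chan unEnd unEnd) →
    CheckVar Γ x (.ep (.q .un .ende)) Γ

/-- Algorithmic process-checking judgment Γ₁ ⊢ P ▷ Γ₂. -/
inductive Check : Ctx → Proc → Ctx → Prop
| inact (Γ : Ctx) : Check Γ .nil Γ
| par {Γ1 Γ2 Γ3 : Ctx} {P Q} : Check Γ1 P Γ2 → Check Γ2 Q Γ3 →
    Check Γ1 (.par P Q) Γ3
| repl {Γ : Ctx} {P} : Check Γ P Γ → Check Γ (.repl P) Γ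
| res {Γ1 Γ2 : Ctx} {y T P O} : SafeC (Ty.toC T) → Γ1 y = none →
    Check (Γ1.upd y T.toC) P Γ2 → Γ2 y = some O → UnC O →
    Check Γ1 (.nu y T P) (Γ2.del y)
| outL {Γ1 Γ2 Γ3 : Ctx} {x y T S P M} :
    Γ1 x = some (.single (.ep (.q .lin (.send T S)))) →
    CheckVar (Γ1.upd x (.single .void)) y T Γ2 →
    Check (Γ2.upd x (.single (.ep S))) P Γ3 →
    Γ3 x = some (.single M) → UnE M →
    Check Γ1 (.out x y P) (Γ3.upd x (.single .void))
| outLl {Γ1 Γ2 : Ctx} {x y T S N P} :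
    Γ1 x = some (.chan (.ep (.q .lin (.send T S))) N) →
    Check (Γ1.upd x (.single (.ep (.q .lin (.send T S))))) (.out x y P) Γ2 →
    Γ2 x = some (.single .void) →
    Check Γ1 (.out x y P) (Γ2.upd x (.chan .void N))
| outLr {Γ1 Γ2 : Ctx} {x y T S M P} :
    Γ1 x = some (.chan M (.ep (.q .lin (.send T S)))) →
    Check (Γ1.upd x (.single (.ep (.q .lin (.send T S))))) (.out x y P) Γ2 →
    Γ2 x = some (.single .void) →
    Check Γ1 (.out x y P) (Γ2.upd x (.chan M .void))
| outUn {Γ1 Γ2 Γ3 : Ctx} {x y T S P} :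
    Γ1 x = some (.single (.ep S)) → Unf S (.q .un (.send T S)) →
    CheckVar Γ1 y T Γ2 → Check Γ2 P Γ3 →
    Check Γ1 (.out x y P) Γ3
| outUnl {Γ1 Γ2 Γ3 : Ctx} {x y T S N P} :
    Γ1 x = some (.chan (.ep S) N) → Unf S (.q .un (.send T S)) →
    CheckVar Γ1 y T Γ2 → Check Γ2 P Γ3 →
    Check Γ1 (.out x y P) Γ3
| outUnr {Γ1 Γ2 Γ3 : Ctx} {x y T S M P} :
    Γ1 x = some (.chan M (.ep S)) → Unf S (.q .un (.send T S)) →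
    CheckVar Γ1 y T Γ2 → Check Γ2 P Γ3 →
    Check Γ1 (.out x y P) Γ3
| inL {Γ1 Γ2 : Ctx} {x y T S P M O} :
    Γ1 x = some (.single (.ep (.q .lin (.recv T S)))) → Γ1 y = none →
    Check ((Γ1.upd x (.single (.ep S))).upd y T.toC) P Γ2 →
    Γ2 x = some (.single M) → UnE M → Γ2 y = some O → UnC O →
    Check Γ1 (.inp x y P) ((Γ2.del y).upd x (.single .void))
| inLl {Γ1 Γ2 : Ctx} {x y T S N P} :
    Γ1 x = some (.chan (.ep (.q .lin (.recv T S))) N) →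
    Check (Γ1.upd x (.single (.ep (.q .lin (.recv T S))))) (.inp x y P) Γ2 →
    Γ2 x = some (.single .void) →
    Check Γ1 (.inp x y P) (Γ2.upd x (.chan .void N))
| inLr {Γ1 Γ2 : Ctx} {x y T S M P} :
    Γ1 x = some (.chan M (.ep (.q .lin (.recv T S)))) →
    Check (Γ1.upd x (.single (.ep (.q .lin (.recv T S))))) (.inp x y P) Γ2 →
    Γ2 x = some (.single .void) →
    Check Γ1 (.inp x y P) (Γ2.upd x (.chan M .void))
| inUn {Γ1 Γ2 : Ctx} {x y T S P O} :
    Γ1 x = some (.single (.ep S)) → Unf S (.q .un (.recv T S)) → Γ1 y = none →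
    Check (Γ1.upd y T.toC) P Γ2 → Γ2 y = some O → UnC O →
    Check Γ1 (.inp x y P) (Γ2.del y)
| inUnl {Γ1 Γ2 : Ctx} {x y T S N P O} :
    Γ1 x = some (.chan (.ep S) N) → Unf S (.q .un (.recv T S)) → Γ1 y = none →
    Check (Γ1.upd y T.toC) P Γ2 → Γ2 y = some O → UnC O →
    Check Γ1 (.inp x y P) (Γ2.del y)
| inUnr {Γ1 Γ2 : Ctx} {x y T S M P O} :
    Γ1 x = some (.chan M (.ep S)) → Unf S (.q .un (.recv T S)) → Γ1 y = none →
    Check (Γ1.upd y T.toC) P Γ2 → Γ2 y = some O → UnC O →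
    Check Γ1 (.inp x y P) (Γ2.del y)

/-- One step of the algorithm: check(Γ,P) directly invokes check(Γ',P'). -/
inductive Invokes : Ctx → Proc → Ctx → Proc → Prop
| par1 {Γ : Ctx} (P Q) : Invokes Γ (.par P Q) Γ P
| par2 {Γ Γ2 : Ctx} {P} (Q) : Check Γ P Γ2 → Invokes Γ (.par P Q) Γ2 Q
| repl {Γ : Ctx} (P) : Invokes Γ (.repl P) Γ P
| res {Γ : Ctx} {y T P} : SafeC (Ty.toC T) → Γ y = none →
    Invokes Γ (.nu y T P) (Γ.upd y T.toC) P
| outL {Γ Γ2 : Ctx} {x y T S P} :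
    Γ x = some (.single (.ep (.q .lin (.send T S)))) →
    CheckVar (Γ.upd x (.single .void)) y T Γ2 →
    Invokes Γ (.out x y P) (Γ2.upd x (.single (.ep S))) P
| outLl {Γ : Ctx} {x y T S N P} :
    Γ x = some (.chan (.ep (.q .lin (.send T S))) N) →
    Invokes Γ (.out x y P) (Γ.upd x (.single (.ep (.q .lin (.send T S))))) (.out x y P)
| outLr {Γ : Ctx} {x y T S M P} :
    Γ x = some (.chan M (.ep (.q .lin (.send T S)))) →
    Invokes Γ (.out x y P) (Γ.upd x (.single (.ep (.q .lin (.send T S))))) (.out x y P)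
| outUn {Γ Γ2 : Ctx} {x y T S P} :
    Γ x = some (.single (.ep S)) → Unf S (.q .un (.send T S)) →
    CheckVar Γ y T Γ2 → Invokes Γ (.out x y P) Γ2 P
| outUnl {Γ Γ2 : Ctx} {x y T S N P} :
    Γ x = some (.chan (.ep S) N) → Unf S (.q .un (.send T S)) →
    CheckVar Γ y T Γ2 → Invokes Γ (.out x y P) Γ2 P
| outUnr {Γ Γ2 : Ctx} {x y T S M P} :
    Γ x = some (.chan M (.ep S)) → Unf S (.q .un (.send T S)) →
    CheckVar Γ y T Γ2 → Invokes Γ (.out x y P) Γ2 P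
| inL {Γ : Ctx} {x y T S P} :
    Γ x = some (.single (.ep (.q .lin (.recv T S)))) → Γ y = none →
    Invokes Γ (.inp x y P) ((Γ.upd x (.single (.ep S))).upd y T.toC) P
| inLl {Γ : Ctx} {x y T S N P} :
    Γ x = some (.chan (.ep (.q .lin (.recv T S))) N) →
    Invokes Γ (.inp x y P) (Γ.upd x (.single (.ep (.q .lin (.recv T S))))) (.inp x y P)
| inLr {Γ : Ctx} {x y T S M P} :
    Γ x = some (.chan M (.ep (.q .lin (.recv T S)))) →
    Invokes Γ (.inp x y P) (Γ.upd x (.single (.ep (.q .lin (.recv T S))))) (.inp x y P)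
| inUn {Γ : Ctx} {x y T S P} :
    Γ x = some (.single (.ep S)) → Unf S (.q .un (.recv T S)) → Γ y = none →
    Invokes Γ (.inp x y P) (Γ.upd y T.toC) P
| inUnl {Γ : Ctx} {x y T S N P} :
    Γ x = some (.chan (.ep S) N) → Unf S (.q .un (.recv T S)) → Γ y = none →
    Invokes Γ (.inp x y P) (Γ.upd y T.toC) P
| inUnr {Γ : Ctx} {x y T S M P} :
    Γ x = some (.chan M (.ep S)) → Unf S (.q .un (.recv T S)) → Γ y = none →
    Invokes Γ (.inp x y P) (Γ.upd y T.toC) P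

/-- check(Γ',P') is (reflexively-transitively) invoked during check(Γ,P). -/
def Reaches : Ctx × Proc → Ctx × Proc → Prop :=
  Relation.ReflTransGen (fun a b => Invokes a.1 a.2 b.1 b.2)

/-! ### The split-based declarative system ⊢_D -/

abbrev DCtx := String → Option Ty

def DCtx.upd (I : DCtx) (x : String) (T : Ty) : DCtx :=
  fun y => if y = x then some T else I y

def UnT : Ty → Prop
| .ep (.q .un _) => True
| .ch (.q .un _) (.q .un _) => True
| _ => False

def UnD (I : DCtx) : Prop := ∀ x T, I x = some T → UnT T

/-- Context-splitting, entrywise. -/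
inductive SplitE : Option Ty → Option Ty → Option Ty → Prop
| none : SplitE none none none
| unEp (p) : SplitE (some (.ep (.q .un p))) (some (.ep (.q .un p))) (some (.ep (.q .un p)))
| unCh (p1 p2) : SplitE (some (.ch (.q .un p1) (.q .un p2)))
    (some (.ch (.q .un p1) (.q .un p2))) (some (.ch (.q .un p1) (.q .un p2)))
| linEpL (p) : SplitE (some (.ep (.q .lin p))) (some (.ep (.q .lin p))) none
| linEpR (p) : SplitE (some (.ep (.q .lin p))) none (some (.ep (.q .lin p)))
| linChL (p1 p2) : SplitE (some (.ch (.q .lin p1) (.q .lin p2)))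
    (some (.ch (.q .lin p1) (.q .lin p2))) none
| linChR (p1 p2) : SplitE (some (.ch (.q .lin p1) (.q .lin p2)))
    none (some (.ch (.q .lin p1) (.q .lin p2)))
| chSplit (p1 p2) : SplitE (some (.ch (.q .lin p1) (.q .lin p2)))
    (some (.ep (.q .lin p1))) (some (.ep (.q .lin p2)))
| mixL (p1 p2) : SplitE (some (.ch (.q .lin p1) (.q .un p2)))
    (some (.ch (.q .lin p1) (.q .un p2))) (some (.ep (.q .un p2)))
| mixR (p1 p2) : SplitE (some (.ch (.q .lin p1) (.q .un p2)))
    (some (.ep (.q .un p2))) (some (.ch (.q .lin p1) (.q .un p2)))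

def DSplit (I I1 I2 : DCtx) : Prop := ∀ x, SplitE (I x) (I1 x) (I2 x)

/-- Declarative value typing. -/
inductive DVal : DCtx → String → Ty → Prop
| var {I : DCtx} {x T} : I x = some T →
    (∀ y T', y ≠ x → I y = some T' → UnT T') → DVal I x T
| strength {I : DCtx} {v S p} : DVal I v (.ch S (.q .un p)) → DVal I v (.ep S)

/-- Declarative process typing I ⊢_D P. -/
inductive DTy : DCtx → Proc → Prop
| inact {I : DCtx} : UnD I → DTy I .nil
| par {I I1 I2 : DCtx} {P Q} : DSplit I I1 I2 → DTy I1 P → DTy I2 Q →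
    DTy I (.par P Q)
| repl {I : DCtx} {P} : DTy I P → UnD I → DTy I (.repl P)
| res {I : DCtx} {x T P} : I x = none → SafeC (Ty.toC T) →
    DTy (I.upd x T) P → DTy I (.nu x T P)
| inn {I : DCtx} {x y S0 qu T S P} :
    I x = some (.ep S0) → Unf S0 (.q qu (.recv T S)) → (qu = .un → S = S0) →
    I y = none → DTy ((I.upd x (.ep S)).upd y T) P →
    DTy I (.inp x y P)
| out {I I1 I2 : DCtx} {x y S0 qu T S P} :
    DSplit I I1 I2 → DVal I1 y T →
    I2 x = some (.ep S0) → Unf S0 (.q qu (.send T S)) → (qu = .un → S = S0) →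
    DTy (I2.upd x (.ep S)) P →
    DTy I (.out x y P)
| innC {I : DCtx} {x y S0 S' qu T S P} :
    I x = some (.ch S0 S') → Unf S0 (.q qu (.recv T S)) → (qu = .un → S = S0) →
    I y = none → DTy ((I.upd x (.ch S S')).upd y T) P →
    DTy I (.inp x y P)
| outC {I I1 I2 : DCtx} {x y S0 S' qu T S P} :
    DSplit I I1 I2 → DVal I1 y T →
    I2 x = some (.ch S0 S') → Unf S0 (.q qu (.send T S)) → (qu = .un → S = S0) →
    DTy (I2.upd x (.ch S S')) P →
    DTy I (.out x y P)

/-! ### Used closure, used map, nabla, and update -/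

/-- The partial used-closure operation on entries, as a relation. -/
inductive ClosE : Entry → Entry → Entry → Prop
| vv : ClosE .void .void .void
| ll (p) : ClosE (.ep (.q .lin p)) (.ep (.q .lin p)) .void
| lv (p) : ClosE (.ep (.q .lin p)) .void (.ep (.q .lin p))
| uu (p) : ClosE (.ep (.q .un p)) (.ep (.q .un p)) (.ep (.q .un p))

inductive ClosC : CEntry → CEntry → CEntry → Prop
| single {M M' O} : ClosE M M' O → ClosC (.single M) (.single M') (.single O)
| chan {M M' N N' O O'} : ClosE M M' O → ClosE N N' O' →
    ClosC (.chan M N) (.chan M' N') (.chan O O')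

/-- Δ is the used closure Γ₁ ▷ Γ₂ of contexts (defined pointwise). -/
def ClosCtx (Γ1 Γ2 Δ : Ctx) : Prop :=
  ∀ x, (Γ1 x = none ∧ Γ2 x = none ∧ Δ x = none) ∨
    ∃ E E' O, Γ1 x = some E ∧ Γ2 x = some E' ∧ ClosC E E' O ∧ Δ x = some O

def Entry.used : Entry → EpTy
| .void => .q .un .ende
| .ep S => S

def CEntry.used : CEntry → Ty
| .single M => .ep M.used
| .chan M N => .ch M.used N.used

/-- Project an algorithmic context to a declarative one via used. -/
def usedCtx (Δ : Ctx) : DCtx := fun x => (Δ x).map CEntry.used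

def Entry.isLin : Entry → Bool
| .ep (.q .lin _) => true
| _ => false

def Entry.isVoid : Entry → Bool
| .void => true
| _ => false

/-- The ∇ operation on entries. -/
def CEntry.nabla : CEntry → CEntry
| .single M => if M.isLin then .single .void else .single M
| .chan M N =>
    if (M.isLin && (N.isLin || N.isVoid)) || (N.isLin && M.isVoid)
    then .chan .void .void else .chan M N

def nablaCtx (Γ : Ctx) : Ctx := fun x => (Γ x).map CEntry.nabla

/-- The (partial) void-filling update ⊎ on entries, as a relation. -/
inductive UpdE : Entry → Entry → Entry → Prop
| void (M) : UpdE .void M M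
| same (M) : UpdE M M M

inductive UpdC : CEntry → CEntry → CEntry → Prop
| single {M N O} : UpdE M N O → UpdC (.single M) (.single N) (.single O)
| chan {M1 M2 M N1 N2 N} : UpdE M1 M2 M → UpdE N1 N2 N →
    UpdC (.chan M1 N1) (.chan M2 N2) (.chan M N)

/-- Δ = Γ₁ ⊎ Γ (pointwise update of contexts). -/
def UpdCtx (Γ1 Γ Δ : Ctx) : Prop :=
  ∀ x, (Γ1 x = none ∧ Γ x = none ∧ Δ x = none) ∨
    ∃ E E' O, Γ1 x = some E ∧ Γ x = some E' ∧ UpdC E E' O ∧ Δ x = some O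

/-- Structural congruence. -/
inductive SC : Proc → Proc → Prop
| comm (P Q) : SC (.par P Q) (.par Q P)
| assoc (P Q R) : SC (.par (.par P Q) R) (.par P (.par Q R))
| parNil (P) : SC (.par P .nil) P
| replUnfold (P) : SC (.repl P) (.par P (.repl P))
| extrude {x T P Q} : x ∉ fv Q → SC (.par (.nu x T P) Q) (.nu x T (.par P Q))
| exch (x T1 y T2 P) : SC (.nu x T1 (.nu y T2 P)) (.nu y T2 (.nu x T1 P))
| nuNilEp (x p) : SC (.nu x (.ep (.q .un p)) .nil) .nil
| nuNilCh (x p1 p2) : SC (.nu x (.ch (.q .un p1) (.q .un p2)) .nil) .nil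
| refl (P) : SC P P
| symm {P Q} : SC P Q → SC Q P
| trans {P Q R} : SC P Q → SC Q R → SC P R
| parCong {P P' Q Q'} : SC P P' → SC Q Q' → SC (.par P Q) (.par P' Q')
| replCong {P P'} : SC P P' → SC (.repl P) (.repl P')
| nuCong {P P'} (x T) : SC P P' → SC (.nu x T P) (.nu x T P')
| outCong {P P'} (x y) : SC P P' → SC (.out x y P) (.out x y P')
| inpCong {P P'} (x y) : SC P P' → SC (.inp x y P) (.inp x y P')

/-! A void entry or void component carries no capability, so no rule can act on it. Hence
stripping it at `x` (deleting a void entry, replacing `(∘, N)` by `N` and `(M, ∘)` by `M`)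
commutes with every rule of the algorithm, by induction on the derivation. Where a rule reads the
entry at `x` itself, that entry is a channel pair with one void half: the splitting rules then
have the stripped judgment as their premise, and the unrestricted pair rules become the
corresponding single-entry rules. Along the way a void at `x` is never refilled, which is what
lets the induction pass through sequential composition. -/

def CEntry.strip : CEntry → Option CEntry
| .single .void => none
| .chan .void N => some (.single N)
| .chan M .void => some (.single M)
| E => some E

theorem CEntry.strip_chan_void_right (M : Entry) :
    (CEntry.chan M .void).strip = some (.single M) := by
  cases M <;> rfl

namespace Ctx

variable {Γ : Ctx} {x y : String} {E E' : CEntry}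

@[simp]
theorem upd_self (Γ : Ctx) (x : String) (E : CEntry) : Γ.upd x E x = some E := by
  simp [upd]

theorem upd_of_ne (h : y ≠ x) (E : CEntry) : Γ.upd x E y = Γ y := by
  simp [upd, h]

theorem del_of_ne (h : y ≠ x) : Γ.del x y = Γ y := by
  simp [del, h]

@[simp]
theorem upd_upd (Γ : Ctx) (x : String) (E E' : CEntry) :
    (Γ.upd x E).upd x E' = Γ.upd x E' := by
  funext z
  by_cases hz : z = x <;> simp [upd, hz]

theorem upd_eq_self (h : Γ x = some E) : Γ.upd x E = Γ := by
  funext z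
  by_cases hz : z = x <;> simp_all [upd]

def strip (Γ : Ctx) (x : String) : Ctx :=
  fun y => if y = x then (Γ x).bind CEntry.strip else Γ y

theorem strip_of_ne (h : y ≠ x) : Γ.strip x y = Γ y := by
  simp [strip, h]

theorem strip_apply_self (h : Γ x = some E) (hE : E.strip = some E') : Γ.strip x x = some E' := by
  simp [strip, h, hE]

theorem strip_apply_eq (h : Γ y = some E) (hE : E.strip = some E) : Γ.strip x y = some E := by
  rcases eq_or_ne y x with rfl | hy
  · exact strip_apply_self h hE
  · rw [strip_of_ne hy, h]

theorem strip_upd_of_ne (h : y ≠ x) : (Γ.upd y E).strip x = (Γ.strip x).upd y E := by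
  funext z
  by_cases hz : z = x <;> by_cases hzy : z = y <;> simp_all [strip, upd]

theorem strip_del_of_ne (h : y ≠ x) : (Γ.del y).strip x = (Γ.strip x).del y := by
  funext z
  by_cases hz : z = x <;> by_cases hzy : z = y <;> simp_all [strip, del]

theorem strip_eq_upd (h : Γ x = some E) (hE : E.strip = some E') : Γ.strip x = Γ.upd x E' := by
  funext z
  by_cases hz : z = x <;> simp_all [strip, upd]

theorem strip_eq_del (h : Γ x = some E) (hE : E.strip = none) : Γ.strip x = Γ.del x := by
  funext z
  by_cases hz : z = x <;> simp_all [strip, del]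

theorem strip_upd_self (hE : E.strip = some E') : (Γ.upd x E).strip x = Γ.upd x E' := by
  rw [strip_eq_upd (upd_self Γ x E) hE, upd_upd]

theorem strip_upd_chan_void_void (h : Γ x = some (.single .void)) :
    (Γ.upd x (.chan .void .void)).strip x = Γ := by
  rw [strip_upd_self rfl, upd_eq_self h]

end Ctx

section

open Ctx

variable {Γ Γ1 Γ2 : Ctx} {x y v : String} {T : Ty} {P : Proc}

inductive HasVoid : Option CEntry → Prop
| single : HasVoid (some (.single .void))
| left (N : Entry) : HasVoid (some (.chan .void N))
| right (M : Entry) : HasVoid (some (.chan M .void))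

theorem HasVoid.ne (hs : HasVoid (Γ x)) (hy : ¬HasVoid (Γ y)) : y ≠ x := by
  rintro rfl
  exact hy hs

theorem HasVoid.ne_of_eq_none (hs : HasVoid (Γ x)) (hy : Γ y = none) : y ≠ x :=
  hs.ne (by rw [hy]; nofun)

theorem HasVoid.right_eq_void {S : EpTy} {N : Entry} (hs : HasVoid (Γ x))
    (h : Γ x = some (.chan (.ep S) N)) : N = .void := by
  rw [h] at hs
  cases hs
  rfl

theorem HasVoid.left_eq_void {S : EpTy} {M : Entry} (hs : HasVoid (Γ x))
    (h : Γ x = some (.chan M (.ep S))) : M = .void := by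
  rw [h] at hs
  cases hs
  rfl

theorem HasVoid.upd {E : CEntry} (hE : HasVoid (some E))
    (h : y ≠ x → HasVoid (Γ y)) : HasVoid (Γ.upd x E y) := by
  rcases eq_or_ne y x with rfl | hy
  · rwa [upd_self]
  · rw [upd_of_ne hy]
    exact h hy

theorem CheckVar.strip_of_ne (h : CheckVar Γ1 v T Γ2) (hv : v ≠ x) :
    CheckVar (Γ1.strip x) v T (Γ2.strip x) := by
  cases h <;> (try rw [strip_upd_of_ne hv]) <;> rw [← Ctx.strip_of_ne (Γ := Γ1) hv] at * <;>
    solve_by_elim only [*, CheckVar.vL, CheckVar.vU, CheckVar.vLLl, CheckVar.vLLr, CheckVar.vLl,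
      CheckVar.vLr, CheckVar.vUUl, CheckVar.vUUr, CheckVar.vUl, CheckVar.vUr, CheckVar.vEE]

theorem CheckVar.strip (h : CheckVar Γ1 v T Γ2) (hs : HasVoid (Γ1 x)) :
    CheckVar (Γ1.strip x) v T (Γ2.strip x) := by
  rcases ne_or_eq v x with hv | rfl
  · exact h.strip_of_ne hv
  cases h
  case vLl hΓ =>
    obtain rfl := hs.right_eq_void hΓ
    rw [strip_eq_upd hΓ (CEntry.strip_chan_void_right _), strip_upd_self rfl]
    simpa using CheckVar.vL (upd_self Γ1 v _)
  case vLr hΓ =>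
    obtain rfl := hs.left_eq_void hΓ
    rw [strip_eq_upd hΓ rfl, strip_upd_self rfl]
    simpa using CheckVar.vL (upd_self Γ1 v _)
  case vUl hΓ _ =>
    obtain rfl := hs.right_eq_void hΓ
    rw [strip_eq_upd hΓ (CEntry.strip_chan_void_right _)]
    exact .vU (upd_self ..)
  case vUr hΓ _ =>
    obtain rfl := hs.left_eq_void hΓ
    rw [strip_eq_upd hΓ rfl]
    exact .vU (upd_self ..)
  all_goals rename_i hΓ; rw [hΓ] at hs; nomatch hs

theorem CheckVar.hasVoid (h : CheckVar Γ1 v T Γ2) (hs : HasVoid (Γ1 x)) : HasVoid (Γ2 x) := by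
  cases h <;> first
    | exact hs
    | exact .upd (by constructor) fun _ => hs

theorem Check.hasVoid (h : Check Γ1 P Γ2) (hs : HasVoid (Γ1 x)) : HasVoid (Γ2 x) := by
  induction h with
  | inact | repl => exact hs
  | par _ _ ih1 ih2 => exact ih2 (ih1 hs)
  | res _ hy _ _ _ ih | inUn _ _ hy _ _ _ ih | inUnl _ _ hy _ _ _ ih | inUnr _ _ hy _ _ _ ih =>
    have hx := (hs.ne_of_eq_none hy).symm
    rw [del_of_ne hx]
    exact ih (by rwa [upd_of_ne hx])
  | outL _ hcv _ _ _ ih =>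
    exact .upd .single fun hx =>
      ih (by rw [upd_of_ne hx]; exact hcv.hasVoid (by rwa [upd_of_ne hx]))
  | outLl _ _ _ ih | inLl _ _ _ ih => exact .upd (.left _) fun hx => ih (by rwa [upd_of_ne hx])
  | outLr _ _ _ ih | inLr _ _ _ ih => exact .upd (.right _) fun hx => ih (by rwa [upd_of_ne hx])
  | outUn _ _ hcv _ ih | outUnl _ _ hcv _ ih | outUnr _ _ hcv _ ih => exact ih (hcv.hasVoid hs)
  | inL _ hy _ _ _ _ _ ih =>
    have hxy := (hs.ne_of_eq_none hy).symm
    exact .upd .single fun hx => by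
      rw [del_of_ne hxy]
      exact ih (by rwa [upd_of_ne hxy, upd_of_ne hx])

theorem Check.strip (h : Check Γ1 P Γ2) (hs : HasVoid (Γ1 x)) :
    Check (Γ1.strip x) P (Γ2.strip x) := by
  induction h with
  | inact => exact .inact _
  | par h1 _ ih1 ih2 => exact .par (ih1 hs) (ih2 (h1.hasVoid hs))
  | repl _ ih => exact .repl (ih hs)
  | res hT hy _ hO hU ih =>
    have hyx := hs.ne_of_eq_none hy
    rw [strip_del_of_ne hyx]
    rw [strip_upd_of_ne hyx] at ih
    exact .res hT ((strip_of_ne hyx).trans hy) (ih (by rwa [upd_of_ne hyx.symm]))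
      ((strip_of_ne hyx).trans hO) hU
  | @outL Γ1 _ _ x0 _ _ _ _ _ hΓ hcv _ hΓ3 hM ih =>
    have hx := hs.ne (by rw [hΓ]; nofun)
    have hs' : HasVoid ((Γ1.upd x0 (.single .void)) x) := by rwa [upd_of_ne hx.symm]
    have hcv' := hcv.strip hs'
    have hck' := ih (by rw [upd_of_ne hx.symm]; exact hcv.hasVoid hs')
    rw [strip_upd_of_ne hx] at hcv' hck' ⊢
    exact .outL ((strip_of_ne hx).trans hΓ) hcv' hck' ((strip_of_ne hx).trans hΓ3) hM
  | @outLl _ _ x0 _ _ _ _ _ hΓ hck hΓ2 ih =>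
    rcases eq_or_ne x0 x with rfl | hx
    -- splitting the channel at `x` itself already produces the stripped judgment `hck`
    · obtain rfl := hs.right_eq_void hΓ
      rwa [strip_eq_upd hΓ (CEntry.strip_chan_void_right _), strip_upd_chan_void_void hΓ2]
    · rw [strip_upd_of_ne hx] at ih ⊢
      exact .outLl ((strip_of_ne hx).trans hΓ) (ih (by rwa [upd_of_ne hx.symm]))
        ((strip_of_ne hx).trans hΓ2)
  | @outLr _ _ x0 _ _ _ _ _ hΓ hck hΓ2 ih =>
    rcases eq_or_ne x0 x with rfl | hx
    · obtain rfl := hs.left_eq_void hΓ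
      rwa [strip_eq_upd hΓ rfl, strip_upd_chan_void_void hΓ2]
    · rw [strip_upd_of_ne hx] at ih ⊢
      exact .outLr ((strip_of_ne hx).trans hΓ) (ih (by rwa [upd_of_ne hx.symm]))
        ((strip_of_ne hx).trans hΓ2)
  | outUn hΓ hUnf hcv _ ih =>
    exact .outUn (strip_apply_eq hΓ rfl) hUnf (hcv.strip hs) (ih (hcv.hasVoid hs))
  | @outUnl _ _ _ x0 _ _ _ _ _ hΓ hUnf hcv _ ih =>
    have hcv' := hcv.strip hs
    have hck' := ih (hcv.hasVoid hs)
    rcases eq_or_ne x0 x with rfl | hx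
    · obtain rfl := hs.right_eq_void hΓ
      exact .outUn (strip_apply_self hΓ (CEntry.strip_chan_void_right _)) hUnf hcv' hck'
    · exact .outUnl ((strip_of_ne hx).trans hΓ) hUnf hcv' hck'
  | @outUnr _ _ _ x0 _ _ _ _ _ hΓ hUnf hcv _ ih =>
    have hcv' := hcv.strip hs
    have hck' := ih (hcv.hasVoid hs)
    rcases eq_or_ne x0 x with rfl | hx
    · obtain rfl := hs.left_eq_void hΓ
      exact .outUn (strip_apply_self hΓ rfl) hUnf hcv' hck'
    · exact .outUnr ((strip_of_ne hx).trans hΓ) hUnf hcv' hck'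
  | inL hΓ hy _ hΓ2 hM hΓ2y hO ih =>
    have hx := hs.ne (by rw [hΓ]; nofun)
    have hyx := hs.ne_of_eq_none hy
    rw [strip_upd_of_ne hx, strip_del_of_ne hyx]
    rw [strip_upd_of_ne hyx, strip_upd_of_ne hx] at ih
    exact .inL ((strip_of_ne hx).trans hΓ) ((strip_of_ne hyx).trans hy)
      (ih (by rwa [upd_of_ne hyx.symm, upd_of_ne hx.symm])) ((strip_of_ne hx).trans hΓ2) hM
      ((strip_of_ne hyx).trans hΓ2y) hO
  | @inLl _ _ x0 _ _ _ _ _ hΓ hck hΓ2 ih =>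
    rcases eq_or_ne x0 x with rfl | hx
    · obtain rfl := hs.right_eq_void hΓ
      rwa [strip_eq_upd hΓ (CEntry.strip_chan_void_right _), strip_upd_chan_void_void hΓ2]
    · rw [strip_upd_of_ne hx] at ih ⊢
      exact .inLl ((strip_of_ne hx).trans hΓ) (ih (by rwa [upd_of_ne hx.symm]))
        ((strip_of_ne hx).trans hΓ2)
  | @inLr _ _ x0 _ _ _ _ _ hΓ hck hΓ2 ih =>
    rcases eq_or_ne x0 x with rfl | hx
    · obtain rfl := hs.left_eq_void hΓ
      rwa [strip_eq_upd hΓ rfl, strip_upd_chan_void_void hΓ2]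
    · rw [strip_upd_of_ne hx] at ih ⊢
      exact .inLr ((strip_of_ne hx).trans hΓ) (ih (by rwa [upd_of_ne hx.symm]))
        ((strip_of_ne hx).trans hΓ2)
  | inUn hΓ hUnf hy _ hΓ2y hO ih =>
    have hyx := hs.ne_of_eq_none hy
    rw [strip_del_of_ne hyx]
    rw [strip_upd_of_ne hyx] at ih
    exact .inUn (strip_apply_eq hΓ rfl) hUnf ((strip_of_ne hyx).trans hy)
      (ih (by rwa [upd_of_ne hyx.symm])) ((strip_of_ne hyx).trans hΓ2y) hO
  | @inUnl _ _ x0 _ _ _ _ _ _ hΓ hUnf hy _ hΓ2y hO ih =>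
    have hyx := hs.ne_of_eq_none hy
    rw [strip_del_of_ne hyx]
    rw [strip_upd_of_ne hyx] at ih
    have hck' := ih (by rwa [upd_of_ne hyx.symm])
    rcases eq_or_ne x0 x with rfl | hx
    · obtain rfl := hs.right_eq_void hΓ
      exact .inUn (strip_apply_self hΓ (CEntry.strip_chan_void_right _)) hUnf
        ((strip_of_ne hyx).trans hy) hck' ((strip_of_ne hyx).trans hΓ2y) hO
    · exact .inUnl ((strip_of_ne hx).trans hΓ) hUnf ((strip_of_ne hyx).trans hy) hck'
        ((strip_of_ne hyx).trans hΓ2y) hO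
  | @inUnr _ _ x0 _ _ _ _ _ _ hΓ hUnf hy _ hΓ2y hO ih =>
    have hyx := hs.ne_of_eq_none hy
    rw [strip_del_of_ne hyx]
    rw [strip_upd_of_ne hyx] at ih
    have hck' := ih (by rwa [upd_of_ne hyx.symm])
    rcases eq_or_ne x0 x with rfl | hx
    · obtain rfl := hs.left_eq_void hΓ
      exact .inUn (strip_apply_self hΓ rfl) hUnf ((strip_of_ne hyx).trans hy) hck'
        ((strip_of_ne hyx).trans hΓ2y) hO
    · exact .inUnr ((strip_of_ne hx).trans hΓ) hUnf ((strip_of_ne hyx).trans hy) hck'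
        ((strip_of_ne hyx).trans hΓ2y) hO

end

/-- algorithmic strengthening for void entries and void components. -/
theorem stmt5 {P : Proc} {x : String} :
    (∀ Γ1 Γ2 : Ctx, Check Γ1 P Γ2 →
      Γ1 x = some (.single .void) → Γ2 x = some (.single .void) →
      Check (Γ1.del x) P (Γ2.del x)) ∧
    (∀ (Γ1 Γ2 : Ctx) (N N' : Entry), Check Γ1 P Γ2 →
      Γ1 x = some (.chan .void N) → Γ2 x = some (.chan .void N') →
      Check (Γ1.upd x (.single N)) P (Γ2.upd x (.single N'))) ∧
    (∀ (Γ1 Γ2 : Ctx) (M M' : Entry), Check Γ1 P Γ2 →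
      Γ1 x = some (.chan M .void) → Γ2 x = some (.chan M' .void) →
      Check (Γ1.upd x (.single M)) P (Γ2.upd x (.single M'))) := by
  refine ⟨fun _ _ h h1 h2 => ?_, fun _ _ N N' h h1 h2 => ?_, fun _ _ M M' h h1 h2 => ?_⟩
  · have := h.strip (by rw [h1]; exact .single)
    rwa [Ctx.strip_eq_del h1 rfl, Ctx.strip_eq_del h2 rfl] at this
  · have := h.strip (by rw [h1]; exact .left N)
    rwa [Ctx.strip_eq_upd h1 rfl, Ctx.strip_eq_upd h2 rfl] at this
  · have := h.strip (by rw [h1]; exact .right M)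
    rwa [Ctx.strip_eq_upd h1 (CEntry.strip_chan_void_right M),
      Ctx.strip_eq_upd h2 (CEntry.strip_chan_void_right M')] at this
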